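/- arXiv:1909.05276 — 2 statements merged into one kernel-verified Lean document; each statement's English description precedes it below -/
import Mathlib

section
/- Let m ≥ 2 and n ≥ 1, let f : E^m → E^n be a function such that 0 is a limit point of the set P_f of distances preserved by f, and let l ∈ P_f. Then f maps each segment of length l isometrically: for all x, y ∈ E^m with d(x, y) = l and all s, t ∈ [0, 1], one has d(f((1−s)·x + s·y), f((1−t)·x + t·y)) = |s − t| · l. -/
/-!
A map preserving a distance `r` moves points at distance at most `2r` by at most `2r`: in
dimension at least two such points are joined by two steps of length `r`, because the sphere of
radius `r` about one of them is connected and the distance to the other one takes the value `r` on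
it. Cutting a segment into pieces of length at most `2r` gives
`d(f x, f y) ≤ d(x, y) + 2r`, so preserved distances accumulating at `0` make `f` `1`-Lipschitz.
A `1`-Lipschitz map preserving the length of a segment cannot shrink any subsegment, since the
three pieces of the segment add up to its length.
-/

open Set Metric AffineMap

/-- `PreservesDist f r` says `r ∈ P_f`. -/
def PreservesDist {α β : Type*} [PseudoMetricSpace α] [PseudoMetricSpace β] (f : α → β)
    (r : ℝ) : Prop :=
  ∀ x y, dist x y = r → dist (f x) (f y) = r

theorem LipschitzWith.dist_eq_of_dist_add_dist_add_dist_eq {α β : Type*} [PseudoMetricSpace α]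
    [PseudoMetricSpace β] {f : α → β} (hf : LipschitzWith 1 f) {x p q y : α}
    (hxy : dist (f x) (f y) = dist x y) (hpq : dist x p + dist p q + dist q y = dist x y) :
    dist (f p) (f q) = dist p q := by
  have h1 (a b : α) : dist (f a) (f b) ≤ dist a b := by simpa using hf.dist_le_mul a b
  refine le_antisymm (h1 p q) ?_
  linarith [dist_triangle4 (f x) (f p) (f q) (f y), h1 x p, h1 q y]

section NormedSpace

variable {E α : Type*} [NormedAddCommGroup E] [NormedSpace ℝ E] [PseudoMetricSpace α]

theorem exists_dist_eq_and_dist_eq (hE : 1 < Module.rank ℝ E) {x y : E} {r : ℝ}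
    (hxy : dist x y ≤ 2 * r) : ∃ z, dist x z = r ∧ dist z y = r := by
  have hr : 0 ≤ r := by linarith [dist_nonneg (x := x) (y := y)]
  rcases eq_or_ne x y with rfl | hne
  · have : Nontrivial E := rank_pos_iff_nontrivial.1 (zero_lt_one.trans hE)
    obtain ⟨z, hz⟩ := NormedSpace.sphere_nonempty (x := x).2 hr
    exact ⟨z, (dist_comm _ _).trans hz, hz⟩
  have hd : 0 < dist x y := dist_pos.2 hne
  obtain ⟨c, hc, rfl⟩ : ∃ c, 0 ≤ c ∧ r = c * dist x y :=
    ⟨r / dist x y, by positivity, (div_mul_cancel₀ _ hd.ne').symm⟩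
  have hc_half : 1 ≤ 2 * c := le_of_mul_le_mul_right (by linarith) hd
  have hsphere (c' : ℝ) (hc' : |c'| = c) : lineMap x y c' ∈ sphere x (c * dist x y) := by
    rw [mem_sphere, dist_lineMap_left, Real.norm_eq_abs, hc']
  have hr_mem : c * dist x y ∈ Icc (dist (lineMap x y c) y) (dist (lineMap x y (-c)) y) := by
    simp only [dist_lineMap_right, Real.norm_eq_abs, sub_neg_eq_add]
    refine ⟨by gcongr; exact abs_sub_le_iff.2 ⟨by linarith, by linarith⟩, ?_⟩
    gcongr
    exact (le_abs_self _).trans' (by linarith)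
  obtain ⟨z, hz, hzy⟩ := (isConnected_sphere hE x hr).isPreconnected.intermediate_value
    (hsphere c (abs_of_nonneg hc)) (hsphere (-c) (by rw [abs_neg, abs_of_nonneg hc]))
    (continuous_id.dist continuous_const).continuousOn hr_mem
  exact ⟨z, (dist_comm _ _).trans hz, hzy⟩

theorem PreservesDist.dist_le_two_mul (hE : 1 < Module.rank ℝ E) {f : E → α} {r : ℝ}
    (hf : PreservesDist f r) {x y : E} (hxy : dist x y ≤ 2 * r) :
    dist (f x) (f y) ≤ 2 * r := by
  obtain ⟨z, hxz, hzy⟩ := exists_dist_eq_and_dist_eq hE hxy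
  calc dist (f x) (f y) ≤ dist (f x) (f z) + dist (f z) (f y) := dist_triangle _ _ _
    _ = 2 * r := by rw [hf x z hxz, hf z y hzy, two_mul]

theorem PreservesDist.dist_le_add (hE : 1 < Module.rank ℝ E) {f : E → α} {r : ℝ}
    (hf : PreservesDist f r) (hr : 0 < r) (x y : E) :
    dist (f x) (f y) ≤ dist x y + 2 * r := by
  set k := ⌊dist x y / (2 * r)⌋₊ + 1
  have hk : (0 : ℝ) < k := by positivity
  have hstep : dist x y / k ≤ 2 * r := by
    rw [div_le_iff₀ hk, mul_comm, ← div_le_iff₀ (by positivity)]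
    exact_mod_cast (Nat.lt_floor_add_one _).le
  have hsum : (k : ℝ) * (2 * r) ≤ dist x y + 2 * r := by
    have := Nat.floor_le (a := dist x y / (2 * r)) (by positivity)
    rw [le_div_iff₀ (by positivity)] at this
    push_cast [k]
    linarith
  clear_value k
  let p : ℕ → E := fun i ↦ lineMap x y ((i : ℝ) / k)
  have hp0 : p 0 = x := by simp [p]
  have hpk : p k = y := by simp [p, hk.ne']
  have hpstep (i : ℕ) : dist (p i) (p (i + 1)) = dist x y / k := by
    rw [dist_lineMap_lineMap, Real.dist_eq, Nat.cast_add_one, ← sub_div, sub_add_cancel_left,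
      abs_div, abs_neg, abs_one, abs_of_pos hk, one_div_mul_eq_div]
  calc dist (f x) (f y) = dist (f (p 0)) (f (p k)) := by rw [hp0, hpk]
    _ ≤ ∑ _ ∈ Finset.range k, 2 * r := by
      refine dist_le_range_sum_of_dist_le (f := f ∘ p) k fun {i} _ ↦ hf.dist_le_two_mul hE ?_
      exact (hpstep i).trans_le hstep
    _ ≤ dist x y + 2 * r := by simpa using hsum

theorem lipschitzWith_one_of_forall_lt_preservesDist (hE : 1 < Module.rank ℝ E) {f : E → α}
    (hf : ∀ ε > 0, ∃ r, 0 < r ∧ r < ε ∧ PreservesDist f r) : LipschitzWith 1 f :=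
  LipschitzWith.of_dist_le_mul fun x y ↦ by
    rw [NNReal.coe_one, one_mul]
    refine le_of_forall_pos_le_add fun ε hε ↦ ?_
    obtain ⟨r, hr, hrε, hfr⟩ := hf (ε / 2) (by positivity)
    linarith [hfr.dist_le_add hE hr x y]

theorem LipschitzWith.dist_lineMap_eq {f : E → α} (hf : LipschitzWith 1 f) {x y : E}
    (hxy : dist (f x) (f y) = dist x y) {s t : ℝ} (hs : s ∈ Icc 0 1) (ht : t ∈ Icc 0 1) :
    dist (f (lineMap x y s)) (f (lineMap x y t)) = |s - t| * dist x y := by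
  wlog hst : s ≤ t generalizing s t
  · rw [dist_comm, abs_sub_comm, this ht hs (le_of_not_ge hst)]
  rw [← Real.dist_eq, ← dist_lineMap_lineMap]
  refine hf.dist_eq_of_dist_add_dist_add_dist_eq hxy ?_
  simp only [dist_left_lineMap, dist_lineMap_lineMap, dist_lineMap_right, Real.norm_eq_abs,
    Real.dist_eq, abs_of_nonneg hs.1, abs_of_nonneg (sub_nonneg.2 ht.2), abs_sub_comm s t,
    abs_of_nonneg (sub_nonneg.2 hst)]
  ring

end NormedSpace

theorem stmt_4_general (m n : ℕ) (hm : 2 ≤ m)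
    (f : EuclideanSpace ℝ (Fin m) → EuclideanSpace ℝ (Fin n))
    (hlim : ∀ ε > 0, ∃ r, 0 < r ∧ r < ε ∧
      ∀ x y, dist x y = r → dist (f x) (f y) = r)
    (l : ℝ)
    (hpl : ∀ x y, dist x y = l → dist (f x) (f y) = l) :
    ∀ x y, dist x y = l → ∀ s ∈ Set.Icc (0:ℝ) 1, ∀ t ∈ Set.Icc (0:ℝ) 1,
      dist (f ((1 - s) • x + s • y)) (f ((1 - t) • x + t • y)) = |s - t| * l := by
  intro x y hxy s hs t ht
  have hrank : 1 < Module.rank ℝ (EuclideanSpace ℝ (Fin m)) := by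
    rw [← Module.finrank_eq_rank, finrank_euclideanSpace_fin]
    exact_mod_cast hm
  have hf : LipschitzWith 1 f := lipschitzWith_one_of_forall_lt_preservesDist hrank hlim
  simpa only [lineMap_apply_module, hxy] using
    hf.dist_lineMap_eq ((hpl x y hxy).trans hxy.symm) hs ht

theorem stmt_4 (m n : ℕ) (hm : 2 ≤ m) (hn : 1 ≤ n)
    (f : EuclideanSpace ℝ (Fin m) → EuclideanSpace ℝ (Fin n))
    (hlim : ∀ ε > 0, ∃ r, 0 < r ∧ r < ε ∧
      ∀ x y, dist x y = r → dist (f x) (f y) = r)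
    (l : ℝ) (hl : 0 < l)
    (hpl : ∀ x y, dist x y = l → dist (f x) (f y) = l) :
    ∀ x y, dist x y = l → ∀ s ∈ Set.Icc (0:ℝ) 1, ∀ t ∈ Set.Icc (0:ℝ) 1,
      dist (f ((1 - s) • x + s • y)) (f ((1 - t) • x + t • y)) = |s - t| * l :=
  stmt_4_general m n hm f hlim l hpl
end

section
/- Let n ≥ 2 and let f : E^n → E^n be a surjective function. If r₁ > r₂ > 0 are both strongly preserved by f, then r₁ − ⌊r₁/r₂⌋·r₂ is either zero or strongly preserved by f (where ⌊·⌋ denotes the floor function). -/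
/-!
In a real inner product space of dimension at least two, the spheres of radii `a, b > 0` about
`p` and `q` meet in exactly one point iff `dist p q = a + b`, or `dist p q = |a - b|` with
`a ≠ b`; otherwise they meet in no point or in more than one. Hence a bijection strongly
preserving `a` and `b` preserves the relation `dist p q ∈ {a + b, |a - b|}`, and one strongly
preserving `c` preserves `dist p q ≤ 2 * c` (two `c`-steps joining `p` to `q`). Separating the
two candidate values by a third preserved relation gives `a + b` from `|a - b|`, hence all
multiples `k * r₂` by induction from `0` and `r₂`, and `|a - b|` from `2 * c`. Taking
`a = r₁`, `b = ⌊r₁ / r₂⌋ * r₂` and `c = r₂` yields the remainder. A map strongly preserving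
`r₁` is injective, since `x ≠ y` are told apart by the point at distance `r₁` from
`x` on the ray from `y` through `x`.
-/

open RealInnerProductSpace Function

section Geometry

variable {E : Type*} [NormedAddCommGroup E] [InnerProductSpace ℝ E]

theorem exists_norm_eq_one_inner_eq_zero (hE : 1 < Module.rank ℝ E) (u : E) :
    ∃ v : E, ‖v‖ = 1 ∧ ⟪u, v⟫ = 0 := by
  have hK : (ℝ ∙ u)ᗮ ≠ ⊥ := by
    rw [Ne, Submodule.orthogonal_eq_bot_iff]
    intro htop
    have := rank_span_le (R := ℝ) ({u} : Set E)
    rw [htop, rank_top, Cardinal.mk_singleton] at this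
    exact hE.not_ge this
  obtain ⟨v, hv, hv0⟩ := Submodule.exists_mem_ne_zero_of_ne_bot hK
  refine ⟨‖v‖⁻¹ • v, by simp [norm_smul, hv0], ?_⟩
  rw [inner_smul_right, Submodule.mem_orthogonal_singleton_iff_inner_right.mp hv, mul_zero]

theorem exists_pair_dist_eq_dist_eq (hE : 1 < Module.rank ℝ E) {p q : E} (hpq : p ≠ q)
    {a b : ℝ} (h₁ : |a - b| ≤ dist p q) (h₂ : dist p q ≤ a + b) :
    ∃ w w', dist p w = a ∧ dist q w = b ∧ dist p w' = a ∧ dist q w' = b ∧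
      (dist w w' * dist p q) ^ 2 =
        ((a + b) ^ 2 - dist p q ^ 2) * (dist p q ^ 2 - (a - b) ^ 2) := by
  set d := dist p q
  have hd : 0 < d := dist_pos.mpr hpq
  obtain ⟨hab₁, hab₂⟩ := abs_sub_le_iff.mp h₁
  obtain ⟨v, hv, hqpv⟩ := exists_norm_eq_one_inner_eq_zero hE (q - p)
  have hqp : ‖q - p‖ = d := (dist_eq_norm' p q).symm
  have pythagoras (c s : ℝ) : ‖c • (q - p) + s • v‖ ^ 2 = (c * d) ^ 2 + s ^ 2 := by
    rw [sq, norm_add_sq_eq_norm_sq_add_norm_sq_real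
      (by simp only [inner_smul_left, inner_smul_right, hqpv, mul_zero]),
      norm_smul, norm_smul, hqp, hv, Real.norm_eq_abs, Real.norm_eq_abs]
    simp only [mul_one, ← pow_two, mul_pow, sq_abs]
  -- `t` is the signed distance from `p` to the foot of `w` on the line `pq`, `s` the height
  obtain ⟨t, ht⟩ : ∃ t, 2 * d * t = d ^ 2 + a ^ 2 - b ^ 2 :=
    ⟨(d ^ 2 + a ^ 2 - b ^ 2) / (2 * d), by field_simp⟩
  have hst : (2 * d) ^ 2 * (a ^ 2 - t ^ 2) =
      ((a + b) ^ 2 - d ^ 2) * (d ^ 2 - (a - b) ^ 2) := by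
    linear_combination (-(2 * d * t + (d ^ 2 + a ^ 2 - b ^ 2))) * ht
  have hP : 0 ≤ a ^ 2 - t ^ 2 := by
    refine nonneg_of_mul_nonneg_right (hst ▸ mul_nonneg ?_ ?_)
      (by positivity : (0 : ℝ) < (2 * d) ^ 2)
    all_goals nlinarith
  set s := √(a ^ 2 - t ^ 2)
  have hs : s ^ 2 = a ^ 2 - t ^ 2 := Real.sq_sqrt hP
  have hsol (σ : ℝ) (hσ : σ ^ 2 = s ^ 2) :
      dist p (p + ((t / d) • (q - p) + σ • v)) = a ∧
        dist q (p + ((t / d) • (q - p) + σ • v)) = b := by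
    rw [dist_eq_norm', dist_eq_norm', add_sub_cancel_left,
      show p + ((t / d) • (q - p) + σ • v) - q = (t / d - 1) • (q - p) + σ • v by module]
    constructor <;> refine (pow_left_inj₀ (norm_nonneg _) (by linarith) two_ne_zero).mp ?_ <;>
      rw [pythagoras] <;> field_simp
    · linear_combination hσ + hs
    · linear_combination hσ + hs - ht
  obtain ⟨hw₁, hw₂⟩ := hsol s rfl
  obtain ⟨hw'₁, hw'₂⟩ := hsol (-s) (neg_sq s)
  refine ⟨_, _, hw₁, hw₂, hw'₁, hw'₂, ?_⟩
  rw [dist_eq_norm, show p + ((t / d) • (q - p) + s • v) - (p + ((t / d) • (q - p) + -s • v))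
    = (2 * s) • v by module, norm_smul, hv, mul_one, ← hst, Real.norm_eq_abs, mul_pow, sq_abs]
  linear_combination (2 * d) ^ 2 * hs

theorem sq_two_mul_dist_mul_dist_eq {p q w : E} (hpq : p ≠ q) {a b : ℝ}
    (hw₁ : dist p w = a) (hw₂ : dist q w = b) :
    (2 * dist p q *
        dist w (p + ((dist p q ^ 2 + a ^ 2 - b ^ 2) / (2 * dist p q ^ 2)) • (q - p))) ^ 2 =
      ((a + b) ^ 2 - dist p q ^ 2) * (dist p q ^ 2 - (a - b) ^ 2) := by
  set d := dist p q
  have hd : d ≠ 0 := dist_ne_zero.mpr hpq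
  rw [dist_eq_norm'] at hw₁ hw₂
  have hqp : ‖q - p‖ = d := (dist_eq_norm' p q).symm
  have hinner : 2 * ⟪w - p, q - p⟫ = d ^ 2 + a ^ 2 - b ^ 2 := by
    have := norm_sub_sq_real (w - p) (q - p)
    rw [sub_sub_sub_cancel_right, hw₁, hw₂, hqp] at this
    linarith
  rw [dist_eq_norm, sub_add_eq_sub_sub, mul_pow, norm_sub_sq_real, inner_smul_right, norm_smul,
    Real.norm_eq_abs, hw₁, hqp]
  simp only [mul_pow, sq_abs]
  field_simp
  linear_combination (-2 * (d ^ 2 + a ^ 2 - b ^ 2)) * hinner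

theorem existsUnique_dist_eq_dist_eq_iff (hE : 1 < Module.rank ℝ E) {p q : E} {a b : ℝ}
    (ha : 0 < a) (hb : 0 < b) :
    (∃! w, dist p w = a ∧ dist q w = b) ↔ dist p q = a + b ∨ (dist p q = |a - b| ∧ a ≠ b) := by
  constructor
  · rintro ⟨w, ⟨hw₁, hw₂⟩, huniq⟩
    rcases eq_or_ne p q with rfl | hpq
    · -- the reflection of `w` in `p` is a second solution
      have hfix : Equiv.pointReflection p w = w :=
        huniq _ ⟨(dist_left_pointReflection p w).trans hw₁,
          (dist_left_pointReflection p w).trans hw₂⟩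
      have := dist_pointReflection_right ℝ p w
      rw [hfix, dist_self, Real.norm_two, hw₁] at this
      linarith
    · obtain ⟨w₁, w₂, h₁, h₂, h₁', h₂', hP⟩ := exists_pair_dist_eq_dist_eq hE hpq
        (hw₁ ▸ hw₂ ▸ abs_dist_sub_le p q w) (hw₁ ▸ hw₂ ▸ dist_triangle_right p q w)
      rw [(huniq w₁ ⟨h₁, h₂⟩).trans (huniq w₂ ⟨h₁', h₂'⟩).symm, dist_self, zero_mul, sq,
        zero_mul, eq_comm, mul_eq_zero, sub_eq_zero, sub_eq_zero] at hP
      have hd := dist_nonneg (x := p) (y := q)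
      rcases hP with hP | hP
      · exact Or.inl ((pow_left_inj₀ hd (by positivity) two_ne_zero).mp hP.symm)
      · have hd' : dist p q = |a - b| :=
          (pow_left_inj₀ hd (abs_nonneg _) two_ne_zero).mp (by rw [sq_abs, hP])
        refine Or.inr ⟨hd', fun hab => hpq ?_⟩
        rwa [hab, sub_self, abs_zero, dist_eq_zero] at hd'
  · intro h
    have hd : 0 < dist p q := by
      rcases h with h | ⟨h, hab⟩
      · linarith
      · exact h ▸ abs_pos.mpr (sub_ne_zero.mpr hab)
    have hpq : p ≠ q := dist_pos.mp hd
    have hP : ((a + b) ^ 2 - dist p q ^ 2) * (dist p q ^ 2 - (a - b) ^ 2) = 0 := by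
      rcases h with h | ⟨h, -⟩ <;> rw [h]
      · ring
      · rw [sq_abs]; ring
    have hrange : |a - b| ≤ dist p q ∧ dist p q ≤ a + b := by
      rcases h with h | ⟨h, -⟩ <;> rw [h] <;> constructor
      all_goals first | exact abs_sub_le_iff.mpr ⟨by linarith, by linarith⟩ | exact le_rfl
    obtain ⟨w, -, hw₁, hw₂, -⟩ := exists_pair_dist_eq_dist_eq hE hpq hrange.1 hrange.2
    -- the circle of solutions has radius `0` here
    have hcentre {w' : E} (hw' : dist p w' = a ∧ dist q w' = b) :
        w' = p + ((dist p q ^ 2 + a ^ 2 - b ^ 2) / (2 * dist p q ^ 2)) • (q - p) := by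
      have := sq_two_mul_dist_mul_dist_eq hpq hw'.1 hw'.2
      rw [hP, sq_eq_zero_iff, mul_eq_zero] at this
      exact dist_eq_zero.mp (this.resolve_left (by positivity))
    exact ⟨w, ⟨hw₁, hw₂⟩, fun w' hw' => (hcentre hw').trans (hcentre ⟨hw₁, hw₂⟩).symm⟩

theorem exists_dist_eq_dist_eq_iff_dist_le (hE : 1 < Module.rank ℝ E) {p q : E} {r : ℝ}
    (hr : 0 ≤ r) : (∃ w, dist p w = r ∧ dist q w = r) ↔ dist p q ≤ 2 * r := by
  constructor
  · rintro ⟨w, hw₁, hw₂⟩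
    linarith [dist_triangle_right p q w]
  · intro h
    rcases eq_or_ne p q with rfl | hpq
    · obtain ⟨v, hv, -⟩ := exists_norm_eq_one_inner_eq_zero hE p
      have : dist p (p + r • v) = r := by
        rw [dist_eq_norm', add_sub_cancel_left, norm_smul, hv, mul_one, Real.norm_of_nonneg hr]
      exact ⟨p + r • v, this, this⟩
    · obtain ⟨w, -, hw₁, hw₂, -⟩ := exists_pair_dist_eq_dist_eq hE hpq (a := r) (b := r)
        (by rw [sub_self, abs_zero]; exact dist_nonneg) (by linarith)
      exact ⟨w, hw₁, hw₂⟩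

end Geometry

def StronglyPreserves {α β : Type*} [PseudoMetricSpace α] [PseudoMetricSpace β] (f : α → β)
    (r : ℝ) : Prop :=
  ∀ x y, dist x y = r ↔ dist (f x) (f y) = r

namespace StronglyPreserves

section Metric

variable {α β : Type*} {f : α → β} {a b : ℝ}

theorem zero [MetricSpace α] [MetricSpace β] (hf : Injective f) : StronglyPreserves f 0 :=
  fun x y => by simp only [dist_eq_zero, hf.eq_iff]

theorem existsUnique_iff [PseudoMetricSpace α] [PseudoMetricSpace β] (hf : Bijective f)
    (ha : StronglyPreserves f a) (hb : StronglyPreserves f b) (x y : α) :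
    (∃! w, dist x w = a ∧ dist y w = b) ↔ ∃! w, dist (f x) w = a ∧ dist (f y) w = b := by
  rw [hf.existsUnique_iff]
  exact existsUnique_congr fun w => and_congr (ha x w) (hb y w)

end Metric

theorem injective {F β : Type*} [NormedAddCommGroup F] [NormedSpace ℝ F] [PseudoMetricSpace β]
    {f : F → β} {r : ℝ} (hr : 0 < r) (h : StronglyPreserves f r) : Injective f := by
  intro x y hxy
  by_contra hne
  have hd : 0 < dist x y := dist_pos.mpr hne
  set z := x + (r / dist x y) • (x - y)
  have hxz : dist x z = r := by
    rw [dist_eq_norm', add_sub_cancel_left, norm_smul, ← dist_eq_norm,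
      Real.norm_of_nonneg (by positivity), div_mul_cancel₀ _ hd.ne']
  have hyz : dist y z = dist x y + r := by
    rw [dist_eq_norm', show z - y = (1 + r / dist x y) • (x - y) by module, norm_smul,
      ← dist_eq_norm, Real.norm_of_nonneg (by positivity), add_mul, one_mul,
      div_mul_cancel₀ _ hd.ne']
  have := (h y z).mpr (hxy ▸ (h x z).mp hxz)
  linarith

section InnerProduct

variable {E : Type*} [NormedAddCommGroup E] [InnerProductSpace ℝ E] {f : E → E} {a b c r : ℝ}

theorem dist_le_two_mul_iff (hE : 1 < Module.rank ℝ E) (hf : Surjective f) (hr : 0 ≤ r)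
    (h : StronglyPreserves f r) (x y : E) : dist x y ≤ 2 * r ↔ dist (f x) (f y) ≤ 2 * r := by
  rw [← exists_dist_eq_dist_eq_iff_dist_le hE hr, ← exists_dist_eq_dist_eq_iff_dist_le hE hr]
  exact (exists_congr fun w => and_congr (h x w) (h y w)).trans
    (hf.exists (p := fun w => dist (f x) w = r ∧ dist (f y) w = r)).symm

theorem add (hE : 1 < Module.rank ℝ E) (hf : Bijective f) (ha : 0 < a) (hb : 0 < b)
    (h_a : StronglyPreserves f a) (h_b : StronglyPreserves f b)
    (h_sub : StronglyPreserves f |a - b|) : StronglyPreserves f (a + b) := by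
  have hne : a + b ≠ |a - b| := (abs_sub_lt_iff.mpr ⟨by linarith, by linarith⟩).ne'
  have key (x y : E) :
      dist x y = a + b ↔ (∃! w, dist x w = a ∧ dist y w = b) ∧ dist x y ≠ |a - b| := by
    rw [existsUnique_dist_eq_dist_eq_iff hE ha hb]
    refine ⟨fun h => ⟨Or.inl h, h ▸ hne⟩, ?_⟩
    rintro ⟨h | h, h'⟩
    exacts [h, absurd h.1 h']
  intro x y
  rw [key, key]
  exact and_congr (h_a.existsUnique_iff hf h_b x y) (h_sub x y).not

theorem abs_sub (hE : 1 < Module.rank ℝ E) (hf : Bijective f) (ha : 0 < a) (hb : 0 < b)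
    (hab : a ≠ b) (h_a : StronglyPreserves f a) (h_b : StronglyPreserves f b)
    (h_c : StronglyPreserves f c) (h₁ : |a - b| ≤ 2 * c) (h₂ : 2 * c < a + b) :
    StronglyPreserves f |a - b| := by
  have key (x y : E) :
      dist x y = |a - b| ↔ (∃! w, dist x w = a ∧ dist y w = b) ∧ dist x y ≤ 2 * c := by
    rw [existsUnique_dist_eq_dist_eq_iff hE ha hb]
    refine ⟨fun h => ⟨Or.inr ⟨h, hab⟩, h ▸ h₁⟩, ?_⟩
    rintro ⟨h | h, h'⟩
    exacts [absurd h' (by linarith), h.1]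
  intro x y
  rw [key, key]
  exact and_congr (h_a.existsUnique_iff hf h_b x y)
    (h_c.dist_le_two_mul_iff hE hf.surjective (by linarith [abs_nonneg (a - b)]) x y)

theorem natCast_mul (hE : 1 < Module.rank ℝ E) (hf : Bijective f) (hr : 0 < r)
    (h : StronglyPreserves f r) (k : ℕ) : StronglyPreserves f (k * r) := by
  induction k using Nat.twoStepInduction with
  | zero => simpa using zero hf.injective
  | one => simpa using h
  | more k _ ih =>
    have := ih.add hE hf (by positivity) hr h (by
      rwa [show (↑(k + 1) : ℝ) * r - r = k * r by push_cast; ring, abs_of_nonneg (by positivity)])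
    convert this using 1
    push_cast
    ring

end InnerProduct

end StronglyPreserves

theorem stmt_18 (n : ℕ) (hn : 2 ≤ n)
    (f : EuclideanSpace ℝ (Fin n) → EuclideanSpace ℝ (Fin n))
    (hf : Function.Surjective f)
    (r₁ r₂ : ℝ) (hr₂ : 0 < r₂) (hr : r₂ < r₁)
    (hp₁ : ∀ x y, dist x y = r₁ ↔ dist (f x) (f y) = r₁)
    (hp₂ : ∀ x y, dist x y = r₂ ↔ dist (f x) (f y) = r₂) :
    r₁ - ⌊r₁ / r₂⌋ * r₂ = 0 ∨
      ∀ x y, dist x y = r₁ - ⌊r₁ / r₂⌋ * r₂ ↔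
        dist (f x) (f y) = r₁ - ⌊r₁ / r₂⌋ * r₂ := by
  have hE : 1 < Module.rank ℝ (EuclideanSpace ℝ (Fin n)) := by
    rw [← Module.finrank_eq_rank, finrank_euclideanSpace_fin]
    exact_mod_cast hn
  have hr₁ : 0 < r₁ := hr₂.trans hr
  have hbij : Bijective f := ⟨StronglyPreserves.injective hr₁ hp₁, hf⟩
  set k := ⌊r₁ / r₂⌋₊
  have hk : ((⌊r₁ / r₂⌋ : ℤ) : ℝ) = k := by
    rw [← Int.natCast_floor_eq_floor (by positivity), Int.cast_natCast]
  have hk₁ : (1 : ℝ) ≤ k := by exact_mod_cast Nat.floor_pos.mpr ((one_le_div hr₂).mpr hr.le)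
  have hkr : k * r₂ ≤ r₁ := (le_div_iff₀ hr₂).mp (Nat.floor_le (by positivity))
  have hkr' : r₁ < (k + 1) * r₂ := (div_lt_iff₀ hr₂).mp (Nat.lt_floor_add_one _)
  rw [hk]
  refine (eq_or_ne (r₁ - k * r₂) 0).imp id fun h0 => ?_
  have hrem : |r₁ - k * r₂| = r₁ - k * r₂ := abs_of_nonneg (sub_nonneg.mpr hkr)
  have := StronglyPreserves.abs_sub hE hbij hr₁ (by positivity) (sub_ne_zero.mp h0) hp₁
    (StronglyPreserves.natCast_mul hE hbij hr₂ hp₂ k) hp₂ (by rw [hrem]; linarith)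
    (by nlinarith)
  rwa [hrem] at this
end
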